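/- arXiv:2104.04825 — 2 statements merged into one kernel-verified Lean document; each statement's English description precedes it below -/
import Mathlib

section
/- Assume (A1)(a). Let D ⊆ S be a finite set and suppose c(i,u) < 0 for all i ∈ D and u ∈ 𝕌(i). Then for each f : S → ℝ vanishing outside D there exists a unique φ : S → ℝ vanishing outside D such that min_{u∈𝕌(i)} [ e^{c(i,u)} Σ_{j∈S} φ(j) P(j|i,u) + f(i) ] = φ(i) for all i ∈ D. Moreover, the unique solution is given by φ(i) = inf_{ζ∈𝔘_m} E_i^ζ[ Σ_{k=0}^{τ−1} e^{Σ_{t=0}^{k−1} c(X_t,ζ_t)} f(X_k) ] for all i ∈ D, where τ = inf{t > 0 : X_t ∉ D} is the first exit time from D. -/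
/-!
Discrete-time controlled Markov chains on the countable state space `S = ℕ`,
with Borel action space `U`, admissible action sets `𝕌 i ⊆ U`, controlled
transition probabilities `P i u j = P(j | i, u)` (valued in `ℝ≥0∞`) and running
cost `c i u = c(i,u)`.

Since admissible policies are deterministic measurable functions of the
history, and the actions appearing in a history are themselves determined by
the past states, an admissible policy is faithfully represented by a family of
maps of state-prefixes `ζ t : (Fin (t+1) → ℕ) → U`; measurability in the
history is automatic because state prefixes form a countable discrete space.
The trajectory law `P_i^ζ` is uniquely determined by its cylinder
probabilities, which are given explicitly by `pathWeight`; accordingly,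
expectations of path functionals are given by explicit (countable) sums.
-/

open Filter Set
open scoped ENNReal NNReal Topology Classical

namespace RSDT

variable {U : Type*}

/-- The action chosen at time `t` under policy `ζ` along the state path `x`. -/
def act (ζ : ∀ t : ℕ, (Fin (t + 1) → ℕ) → U) (x : ℕ → ℕ) (t : ℕ) : U :=
  ζ t fun s : Fin (t + 1) => x s.val

/-- Admissibility of a policy: all chosen actions lie in the admissible sets. -/
def IsAdmissible (𝕌 : ℕ → Set U) (ζ : ∀ t : ℕ, (Fin (t + 1) → ℕ) → U) : Prop :=
  ∀ (t : ℕ) (h : Fin (t + 1) → ℕ), ζ t h ∈ 𝕌 (h (Fin.last t))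

/-- The stationary Markov policy attached to `v : S → U`. -/
def smPolicy (v : ℕ → U) : ∀ t : ℕ, (Fin (t + 1) → ℕ) → U :=
  fun t h => v (h (Fin.last t))

/-- The (time-dependent) Markov policy attached to `v : ℕ → S → U`. -/
def mPolicy (v : ℕ → ℕ → U) : ∀ t : ℕ, (Fin (t + 1) → ℕ) → U :=
  fun t h => v t (h (Fin.last t))

/-- `v : S → U` is a stationary Markov selector for the action sets `𝕌`. -/
def IsSM (𝕌 : ℕ → Set U) (v : ℕ → U) : Prop := ∀ i, v i ∈ 𝕌 i

/-- Probability, under the trajectory law `P_i^ζ`, that the chain follows the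
path `x` during its first `T` steps. -/
noncomputable def pathWeight (P : ℕ → U → ℕ → ℝ≥0∞)
    (ζ : ∀ t : ℕ, (Fin (t + 1) → ℕ) → U) (i T : ℕ) (x : ℕ → ℕ) : ℝ≥0∞ :=
  (if x 0 = i then 1 else 0) * ∏ t ∈ Finset.range T, P (x t) (act ζ x t) (x (t + 1))

/-- Extension of a finite path to an infinite one (freezing the last state). -/
def extN (T : ℕ) (x : Fin (T + 1) → ℕ) : ℕ → ℕ :=
  fun n => x ⟨min n T, Nat.lt_succ_of_le (min_le_right n T)⟩

/-- `E_i^ζ [F(X_0, …, X_T)]` for a nonnegative functional `F` of the first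
`T + 1` states. -/
noncomputable def pathExp (P : ℕ → U → ℕ → ℝ≥0∞)
    (ζ : ∀ t : ℕ, (Fin (t + 1) → ℕ) → U) (i T : ℕ) (F : (ℕ → ℕ) → ℝ≥0∞) : ℝ≥0∞ :=
  ∑' x : Fin (T + 1) → ℕ, pathWeight P ζ i T (extN T x) * F (extN T x)

/-- The ergodic risk-sensitive cost
`𝓔_i(c,ζ) = limsup_{T→∞} (1/T) log E_i^ζ [exp (∑_{t<T} c(X_t, ζ_t))]`. -/
noncomputable def ergCost (P : ℕ → U → ℕ → ℝ≥0∞) (c : ℕ → U → ℝ)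
    (ζ : ∀ t : ℕ, (Fin (t + 1) → ℕ) → U) (i : ℕ) : EReal :=
  Filter.limsup
    (fun T : ℕ => (((T : ℝ)⁻¹ : ℝ) : EReal) *
      ENNReal.log (pathExp P ζ i T fun x =>
        ENNReal.ofReal (Real.exp (∑ t ∈ Finset.range T, c (x t) (act ζ x t)))))
    Filter.atTop

/-- The optimal value `λ* = inf_{i ∈ S} inf_{ζ ∈ 𝔘} 𝓔_i(c,ζ)`. -/
noncomputable def lamStar (P : ℕ → U → ℕ → ℝ≥0∞) (c : ℕ → U → ℝ) (𝕌 : ℕ → Set U) : EReal :=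
  ⨅ (i : ℕ) (ζ : {ζ : ∀ t : ℕ, (Fin (t + 1) → ℕ) → U // IsAdmissible 𝕌 ζ}),
    ergCost P c ζ.1 i

/-- `E_i^ζ [ G(τ̆(B), X) ; τ̆(B) < ∞ ]`, where `τ̆(B) = inf {t > 0 : X_t ∈ B}`
is the first hitting time of `B`. -/
noncomputable def hitExp (P : ℕ → U → ℕ → ℝ≥0∞)
    (ζ : ∀ t : ℕ, (Fin (t + 1) → ℕ) → U) (i : ℕ) (B : Set ℕ)
    (G : ℕ → (ℕ → ℕ) → ℝ≥0∞) : ℝ≥0∞ :=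
  ∑' (m : ℕ) (x : Fin (m + 1 + 1) → ℕ),
    if extN (m + 1) x (m + 1) ∈ B ∧ ∀ t, 0 < t → t < m + 1 → extN (m + 1) x t ∉ B then
      pathWeight P ζ i (m + 1) (extN (m + 1) x) * G (m + 1) (extN (m + 1) x)
    else 0

/-- `P_i^ζ (τ̆(B) < ∞)`. -/
noncomputable def hitProb (P : ℕ → U → ℕ → ℝ≥0∞)
    (ζ : ∀ t : ℕ, (Fin (t + 1) → ℕ) → U) (i : ℕ) (B : Set ℕ) : ℝ≥0∞ :=
  hitExp P ζ i B fun _ _ => 1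

/-- Recurrence under a stationary Markov policy: from every state, every state
is hit with probability one. -/
def Recurrent (P : ℕ → U → ℕ → ℝ≥0∞) (v : ℕ → U) : Prop :=
  ∀ i j : ℕ, hitProb P (smPolicy v) i {j} = 1

/-- Irreducibility under a stationary Markov policy. -/
def Irreducible (P : ℕ → U → ℕ → ℝ≥0∞) (v : ℕ → U) : Prop :=
  ∀ i j : ℕ, i ≠ j → ∃ n : ℕ, 0 < n ∧ ∃ x : ℕ → ℕ, x 0 = i ∧ x n = j ∧
    ∀ t < n, 0 < P (x t) (v (x t)) (x (t + 1))

/-- A function on the state space is norm-like (inf-compact) if all its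
sublevel sets are finite (or empty). -/
def NormLike (g : ℕ → ℝ) : Prop := ∀ κ : ℝ, {i | g i ≤ κ}.Finite

/-- `max_{u ∈ 𝕌(i)} c(i, u)`. -/
noncomputable def maxCost (c : ℕ → U → ℝ) (𝕌 : ℕ → Set U) (i : ℕ) : ℝ :=
  sSup ((fun u => c i u) '' 𝕌 i)

/-- `‖c‖_∞ = sup_{i ∈ S} sup_{u ∈ 𝕌(i)} c(i,u)`. -/
noncomputable def supCost (c : ℕ → U → ℝ) (𝕌 : ℕ → Set U) : ℝ :=
  sSup {r : ℝ | ∃ i, ∃ u ∈ 𝕌 i, c i u = r}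

/-- The one-step minimized operator
`ψ ↦ min_{u ∈ 𝕌(i)} e^{c(i,u)} ∑_{j ∈ S} ψ(j) P(j|i,u)`. -/
noncomputable def minOp (P : ℕ → U → ℕ → ℝ≥0∞) (c : ℕ → U → ℝ)
    (𝕌 : ℕ → Set U) (ψ : ℕ → ℝ≥0∞) (i : ℕ) : ℝ≥0∞ :=
  ⨅ u : 𝕌 i, ENNReal.ofReal (Real.exp (c i u.1)) * ∑' j, ψ j * P i u.1 j

/-- Structural standing assumptions on the discrete-time control model. -/
structure Model [TopologicalSpace U] [MeasurableSpace U]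
    (P : ℕ → U → ℕ → ℝ≥0∞) (c : ℕ → U → ℝ) (𝕌 : ℕ → Set U) : Prop where
  nonempty : ∀ i, (𝕌 i).Nonempty
  compact : ∀ i, IsCompact (𝕌 i)
  prob : ∀ i, ∀ u ∈ 𝕌 i, ∑' j, P i u j = 1
  measP : ∀ i j, Measurable fun u => P i u j

/-- Assumption (A1)(a): continuity in the action variable. -/
structure A1a [TopologicalSpace U] (P : ℕ → U → ℕ → ℝ≥0∞) (c : ℕ → U → ℝ)
    (𝕌 : ℕ → Set U) : Prop where
  cCont : ∀ i, ContinuousOn (fun u => c i u) (𝕌 i)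
  PCont : ∀ (i : ℕ) (f : ℕ → ℝ), (∃ M, ∀ j, |f j| ≤ M) →
    ContinuousOn (fun u => ∑' j, f j * (P i u j).toReal) (𝕌 i)

/-- Assumption (A1)(b): from the reference state `i₀` every other state is
reached in one step with positive probability. -/
def A1b (P : ℕ → U → ℕ → ℝ≥0∞) (𝕌 : ℕ → Set U) (i₀ : ℕ) : Prop :=
  ∀ j ≠ i₀, ∀ u ∈ 𝕌 i₀, 0 < P i₀ u j

/-- Foster–Lyapunov condition (A2)(a). -/
structure A2a (P : ℕ → U → ℕ → ℝ≥0∞) (c : ℕ → U → ℝ) (𝕌 : ℕ → Set U)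
    (V : ℕ → ℝ≥0∞) (K : Finset ℕ) (Chat : ℝ≥0∞) (β : ℝ) : Prop where
  betaPos : 0 < β
  betaLtOne : β < 1
  ChatPos : 0 < Chat
  ChatFin : Chat ≠ ∞
  Vone : ∀ i, 1 ≤ V i
  Vfin : ∀ i, V i ≠ ∞
  lyap : ∀ i, ∀ u ∈ 𝕌 i,
    ∑' j, V j * P i u j ≤ ENNReal.ofReal (1 - β) * V i + (if i ∈ K then Chat else 0)
  cBdd : ∃ M : ℝ, M < Real.log (1 / (1 - β)) ∧ ∀ i, ∀ u ∈ 𝕌 i, c i u ≤ M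

/-- Foster–Lyapunov condition (A2)(b). -/
structure A2b (P : ℕ → U → ℕ → ℝ≥0∞) (c : ℕ → U → ℝ) (𝕌 : ℕ → Set U)
    (V : ℕ → ℝ≥0∞) (K : Finset ℕ) (Chat : ℝ≥0∞) (ℓ : ℕ → ℝ) : Prop where
  ChatPos : 0 < Chat
  ChatFin : Chat ≠ ∞
  Vone : ∀ i, 1 ≤ V i
  Vfin : ∀ i, V i ≠ ∞
  ellNonneg : ∀ i, 0 ≤ ℓ i
  ellNormLike : NormLike ℓ
  lyap : ∀ i, ∀ u ∈ 𝕌 i,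
    ∑' j, V j * P i u j ≤ (if i ∈ K then Chat else 0) + ENNReal.ofReal (Real.exp (-ℓ i)) * V i
  gap : NormLike fun i => ℓ i - maxCost c 𝕌 i

/-- Assumption (A2): irreducibility under every stationary Markov policy plus
one of the two Foster–Lyapunov drift conditions. -/
def A2 (P : ℕ → U → ℕ → ℝ≥0∞) (c : ℕ → U → ℝ) (𝕌 : ℕ → Set U) : Prop :=
  (∀ v : ℕ → U, IsSM 𝕌 v → Irreducible P v) ∧
  ∃ (V : ℕ → ℝ≥0∞) (K : Finset ℕ) (Chat : ℝ≥0∞),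
    (∃ β : ℝ, A2a P c 𝕌 V K Chat β) ∨ ∃ ℓ : ℕ → ℝ, A2b P c 𝕌 V K Chat ℓ

end RSDT

namespace RSDT

/-- `E_i^ζ [ ∑_{k=0}^{τ-1} e^{∑_{t<k} c(X_t,ζ_t)} f(X_k) ]`, where
`τ = inf {t > 0 : X_t ∉ D}` is the first exit time from `D`. -/
noncomputable def dirichletSum {U : Type*} (P : ℕ → U → ℕ → ℝ≥0∞) (c : ℕ → U → ℝ)
    (ζ : ∀ t : ℕ, (Fin (t + 1) → ℕ) → U) (i : ℕ) (D : Set ℕ) (f : ℕ → ℝ) : ℝ :=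
  ∑' (k : ℕ) (x : Fin (k + 1) → ℕ),
    if ∀ t, 0 < t → t ≤ k → extN k x t ∈ D then
      (pathWeight P ζ i k (extN k x)).toReal *
        Real.exp (∑ t ∈ Finset.range k, c (extN k x t) (act ζ (extN k x) t)) * f (extN k x k)
    else 0

section Aux

variable {U : Type*}

lemma act_mPolicy (v : ℕ → ℕ → U) (x : ℕ → ℕ) (t : ℕ) :
    act (mPolicy v) x t = v t (x t) := rfl

lemma pathWeight_mPolicy (P : ℕ → U → ℕ → ℝ≥0∞) (v : ℕ → ℕ → U) (i T : ℕ) (x : ℕ → ℕ) :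
    pathWeight P (mPolicy v) i T x =
      (if x 0 = i then 1 else 0) * ∏ t ∈ Finset.range T, P (x t) (v t (x t)) (x (t + 1)) := rfl

lemma extN_le {T n : ℕ} (x : Fin (T + 1) → ℕ) (h : n ≤ T) :
    extN T x n = x ⟨n, Nat.lt_succ_of_le h⟩ := by
  simp only [extN]
  congr 1
  exact Fin.ext (min_eq_left h)

lemma extN_snoc_le {k : ℕ} (y : Fin (k + 1) → ℕ) (j : ℕ) {t : ℕ} (h : t ≤ k) :
    extN (k + 1) (Fin.snoc y j) t = extN k y t := by
  rw [extN_le _ (h.trans (Nat.le_succ k)), extN_le _ h]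
  have : (⟨t, Nat.lt_succ_of_le (h.trans (Nat.le_succ k))⟩ : Fin (k + 2)) =
      Fin.castSucc ⟨t, Nat.lt_succ_of_le h⟩ := rfl
  rw [this, Fin.snoc_castSucc]

lemma extN_snoc_last {k : ℕ} (y : Fin (k + 1) → ℕ) (j : ℕ) :
    extN (k + 1) (Fin.snoc y j) (k + 1) = j := by
  rw [extN_le _ le_rfl]
  exact Fin.snoc_last _ _

lemma extN_cons_zero {k : ℕ} (j : ℕ) (y : Fin (k + 1) → ℕ) :
    extN (k + 1) (Fin.cons j y) 0 = j := by
  rw [extN_le _ (Nat.zero_le _)]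
  rfl

lemma extN_cons_succ {k : ℕ} (j : ℕ) (y : Fin (k + 1) → ℕ) (t : ℕ) :
    extN (k + 1) (Fin.cons j y) (t + 1) = extN k y t := by
  simp only [extN]
  have h1 : min (t + 1) (k + 1) = min t k + 1 := Nat.succ_min_succ t k
  have : (⟨min (t + 1) (k + 1), Nat.lt_succ_of_le (min_le_right _ _)⟩ : Fin (k + 2)) =
      Fin.succ ⟨min t k, Nat.lt_succ_of_le (min_le_right _ _)⟩ := Fin.ext h1
  rw [this, Fin.cons_succ]

end Aux
section Aux2

variable {U : Type*} [TopologicalSpace U] [MeasurableSpace U]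

lemma pw_snoc (P : ℕ → U → ℕ → ℝ≥0∞) (v : ℕ → ℕ → U) (i k : ℕ)
    (y : Fin (k + 1) → ℕ) (j : ℕ) :
    pathWeight P (mPolicy v) i (k + 1) (extN (k + 1) (Fin.snoc y j)) =
      pathWeight P (mPolicy v) i k (extN k y) *
        P (extN k y k) (v k (extN k y k)) j := by
  simp only [pathWeight_mPolicy]
  rw [Finset.prod_range_succ]
  have h0 : extN (k + 1) (Fin.snoc y j) 0 = extN k y 0 := extN_snoc_le y j (Nat.zero_le k)
  have hp : ∀ t ∈ Finset.range k,
      P (extN (k + 1) (Fin.snoc y j) t) (v t (extN (k + 1) (Fin.snoc y j) t))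
          (extN (k + 1) (Fin.snoc y j) (t + 1)) =
        P (extN k y t) (v t (extN k y t)) (extN k y (t + 1)) := by
    intro t ht
    have ht' := Finset.mem_range.mp ht
    rw [extN_snoc_le y j ht'.le, extN_snoc_le y j ht']
  rw [Finset.prod_congr rfl hp, h0, extN_snoc_le y j le_rfl, extN_snoc_last y j]
  ring

/-- Total mass of paths is at most one. -/
lemma pw_mass (P : ℕ → U → ℕ → ℝ≥0∞) (c : ℕ → U → ℝ) (𝕌 : ℕ → Set U) (hM : Model P c 𝕌)
    (v : ℕ → ℕ → U) (hv : ∀ t j, v t j ∈ 𝕌 j) (i : ℕ) :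
    ∀ k : ℕ, ∑' x : Fin (k + 1) → ℕ, pathWeight P (mPolicy v) i k (extN k x) ≤ 1 := by
  intro k
  induction k with
  | zero =>
    have : ∀ x : Fin 1 → ℕ, pathWeight P (mPolicy v) i 0 (extN 0 x) =
        (if x 0 = i then 1 else 0) := by
      intro x
      simp [pathWeight_mPolicy, extN_le x (le_refl 0)]
    rw [tsum_congr this]
    rw [← (Equiv.funUnique (Fin 1) ℕ).symm.tsum_eq (fun x : Fin 1 → ℕ => if x 0 = i then (1:ℝ≥0∞) else 0)]
    simp only [Equiv.funUnique, Equiv.symm, Equiv.coe_fn_mk]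
    exact le_of_eq (tsum_ite_eq i (fun _ => (1:ℝ≥0∞)))
  | succ k ih =>
    set e : (Fin (k + 1) → ℕ) × ℕ ≃ (Fin (k + 2) → ℕ) :=
      { toFun := fun p => Fin.snoc p.1 p.2
        invFun := fun x => (Fin.init x, x (Fin.last _))
        left_inv := by rintro ⟨y, j⟩; simp
        right_inv := by intro x; simp } with he
    rw [← e.tsum_eq (fun x : Fin (k + 2) → ℕ => pathWeight P (mPolicy v) i (k + 1) (extN (k + 1) x))]
    have : ∀ p : (Fin (k + 1) → ℕ) × ℕ,
        pathWeight P (mPolicy v) i (k + 1) (extN (k + 1) (e p)) =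
          pathWeight P (mPolicy v) i k (extN k p.1) *
            P (extN k p.1 k) (v k (extN k p.1 k)) p.2 := fun p => pw_snoc P v i k p.1 p.2
    rw [tsum_congr this, ENNReal.tsum_prod']
    calc ∑' (y : Fin (k+1) → ℕ) (j : ℕ), pathWeight P (mPolicy v) i k (extN k y) *
            P (extN k y k) (v k (extN k y k)) j
        = ∑' (y : Fin (k+1) → ℕ), pathWeight P (mPolicy v) i k (extN k y) *
            ∑' j, P (extN k y k) (v k (extN k y k)) j := by
          exact tsum_congr fun y => ENNReal.tsum_mul_left
      _ = ∑' (y : Fin (k+1) → ℕ), pathWeight P (mPolicy v) i k (extN k y) := by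
          refine tsum_congr fun y => ?_
          rw [hM.prob _ _ (hv k _), mul_one]
      _ ≤ 1 := ih

lemma pw_le_one (P : ℕ → U → ℕ → ℝ≥0∞) (c : ℕ → U → ℝ) (𝕌 : ℕ → Set U) (hM : Model P c 𝕌)
    (v : ℕ → ℕ → U) (hv : ∀ t j, v t j ∈ 𝕌 j) (i T : ℕ) (x : ℕ → ℕ) :
    pathWeight P (mPolicy v) i T x ≤ 1 := by
  rw [pathWeight_mPolicy]
  have h1 : (if x 0 = i then (1:ℝ≥0∞) else 0) ≤ 1 := by split <;> simp
  have h2 : ∏ t ∈ Finset.range T, P (x t) (v t (x t)) (x (t + 1)) ≤ 1 := by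
    refine Finset.prod_le_one (fun t _ => zero_le) (fun t _ => ?_)
    calc P (x t) (v t (x t)) (x (t + 1)) ≤ ∑' j, P (x t) (v t (x t)) j := ENNReal.le_tsum _
      _ = 1 := hM.prob _ _ (hv t _)
  calc (if x 0 = i then (1:ℝ≥0∞) else 0) * ∏ t ∈ Finset.range T, P (x t) (v t (x t)) (x (t+1))
      ≤ 1 * 1 := mul_le_mul' h1 h2
    _ = 1 := one_mul 1

end Aux2
section Aux3

set_option linter.unusedSectionVars false

variable {U : Type*} [TopologicalSpace U] [MeasurableSpace U]

/-- The `ℝ≥0∞`-valued summand of the Dirichlet sum, for a Markov policy. -/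
noncomputable def trm (P : ℕ → U → ℕ → ℝ≥0∞) (c : ℕ → U → ℝ) (D : Finset ℕ)
    (v : ℕ → ℕ → U) (i : ℕ) (g : ℕ → ℝ≥0∞) (k : ℕ) (x : Fin (k + 1) → ℕ) : ℝ≥0∞ :=
  if ∀ t, 0 < t → t ≤ k → extN k x t ∈ (D : Set ℕ) then
    pathWeight P (mPolicy v) i k (extN k x) *
      (ENNReal.ofReal (Real.exp (∑ t ∈ Finset.range k, c (extN k x t) (v t (extN k x t)))) *
        g (extN k x k))
  else 0

/-- The `ℝ≥0∞`-valued Dirichlet sum. -/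
noncomputable def SvE (P : ℕ → U → ℕ → ℝ≥0∞) (c : ℕ → U → ℝ) (D : Finset ℕ)
    (v : ℕ → ℕ → U) (i : ℕ) (g : ℕ → ℝ≥0∞) : ℝ≥0∞ :=
  ∑' (k : ℕ) (x : Fin (k + 1) → ℕ), trm P c D v i g k x

lemma trm_zero_sum (P : ℕ → U → ℕ → ℝ≥0∞) (c : ℕ → U → ℝ) (D : Finset ℕ)
    (v : ℕ → ℕ → U) (i : ℕ) (g : ℕ → ℝ≥0∞) :
    ∑' x : Fin 1 → ℕ, trm P c D v i g 0 x = g i := by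
  have h : ∀ x : Fin 1 → ℕ, trm P c D v i g 0 x =
      (if x 0 = i then 1 else 0) * g (x 0) := by
    intro x
    have hc : ∀ t, 0 < t → t ≤ 0 → extN 0 x t ∈ (D : Set ℕ) := by omega
    have he : extN 0 x 0 = x 0 := extN_le x le_rfl
    unfold trm
    rw [if_pos hc]
    simp [pathWeight_mPolicy, he]
  rw [tsum_congr h]
  rw [← (Equiv.funUnique (Fin 1) ℕ).symm.tsum_eq
    (fun x : Fin 1 → ℕ => (if x 0 = i then (1:ℝ≥0∞) else 0) * g (x 0))]
  simp only [Equiv.funUnique, Equiv.symm, Equiv.coe_fn_mk]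
  rw [tsum_eq_single i]
  · simp
  · intro b hb
    simp [hb]

lemma trm_indicator (P : ℕ → U → ℕ → ℝ≥0∞) (c : ℕ → U → ℝ) (D : Finset ℕ)
    (v : ℕ → ℕ → U) (j : ℕ) (g : ℕ → ℝ≥0∞) (k : ℕ) (y : Fin (k + 1) → ℕ) :
    trm P c D v j g k y =
      (if extN k y 0 = j then 1 else 0) * trm P c D v (extN k y 0) g k y := by
  by_cases h : extN k y 0 = j
  · rw [if_pos h, h, one_mul]
  · rw [if_neg h, zero_mul]
    unfold trm
    split_ifs with hc
    · rw [pathWeight_mPolicy, if_neg h, zero_mul, zero_mul]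
    · rfl

lemma trm_le (P : ℕ → U → ℕ → ℝ≥0∞) (c : ℕ → U → ℝ) (𝕌 : ℕ → Set U) (D : Finset ℕ)
    (v : ℕ → ℕ → U) (hv : ∀ t j, v t j ∈ 𝕌 j) (i : ℕ) (hi : i ∈ D)
    (g : ℕ → ℝ≥0∞) (M : ℝ≥0∞) (hg : ∀ j ∈ D, g j ≤ M)
    (ρ : ℝ) (hρ0 : 0 ≤ ρ) (hρ : ∀ a ∈ D, ∀ u ∈ 𝕌 a, Real.exp (c a u) ≤ ρ)
    (k : ℕ) (x : Fin (k + 1) → ℕ) :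
    trm P c D v i g k x ≤
      pathWeight P (mPolicy v) i k (extN k x) * (ENNReal.ofReal (ρ ^ k) * M) := by
  unfold trm
  split_ifs with hc
  · by_cases h0 : extN k x 0 = i
    · have hmem : ∀ t ≤ k, extN k x t ∈ D := by
        intro t ht
        rcases Nat.eq_zero_or_pos t with h | h
        · rw [h, h0]; exact hi
        · exact hc t h ht
      refine mul_le_mul_right (mul_le_mul' ?_ (hg _ (hmem k le_rfl))) _
      refine ENNReal.ofReal_le_ofReal ?_
      rw [Real.exp_sum]
      calc ∏ t ∈ Finset.range k, Real.exp (c (extN k x t) (v t (extN k x t)))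
          ≤ ∏ t ∈ Finset.range k, ρ := by
            refine Finset.prod_le_prod (fun t _ => (Real.exp_pos _).le) (fun t ht => ?_)
            exact hρ _ (hmem t (Finset.mem_range.mp ht).le) _ (hv t _)
        _ = ρ ^ k := by rw [Finset.prod_const, Finset.card_range]
    · rw [pathWeight_mPolicy, if_neg h0, zero_mul, zero_mul]
      exact zero_le
  · exact zero_le

lemma inner_sum_le (P : ℕ → U → ℕ → ℝ≥0∞) (c : ℕ → U → ℝ) (𝕌 : ℕ → Set U) (hM : Model P c 𝕌)
    (D : Finset ℕ)
    (v : ℕ → ℕ → U) (hv : ∀ t j, v t j ∈ 𝕌 j) (i : ℕ) (hi : i ∈ D)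
    (g : ℕ → ℝ≥0∞) (M : ℝ≥0∞) (hg : ∀ j ∈ D, g j ≤ M)
    (ρ : ℝ) (hρ0 : 0 ≤ ρ) (hρ : ∀ a ∈ D, ∀ u ∈ 𝕌 a, Real.exp (c a u) ≤ ρ) (k : ℕ) :
    ∑' x : Fin (k + 1) → ℕ, trm P c D v i g k x ≤ ENNReal.ofReal (ρ ^ k) * M := by
  calc ∑' x : Fin (k + 1) → ℕ, trm P c D v i g k x
      ≤ ∑' x : Fin (k + 1) → ℕ,
          pathWeight P (mPolicy v) i k (extN k x) * (ENNReal.ofReal (ρ ^ k) * M) :=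
        ENNReal.tsum_le_tsum (trm_le P c 𝕌 D v hv i hi g M hg ρ hρ0 hρ k)
    _ = (∑' x : Fin (k + 1) → ℕ, pathWeight P (mPolicy v) i k (extN k x)) *
          (ENNReal.ofReal (ρ ^ k) * M) := ENNReal.tsum_mul_right
    _ ≤ 1 * (ENNReal.ofReal (ρ ^ k) * M) :=
        mul_le_mul_left (pw_mass P c 𝕌 hM v hv i k) _
    _ = ENNReal.ofReal (ρ ^ k) * M := one_mul _

lemma SvE_le (P : ℕ → U → ℕ → ℝ≥0∞) (c : ℕ → U → ℝ) (𝕌 : ℕ → Set U) (hM : Model P c 𝕌)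
    (D : Finset ℕ)
    (v : ℕ → ℕ → U) (hv : ∀ t j, v t j ∈ 𝕌 j) (i : ℕ) (hi : i ∈ D)
    (g : ℕ → ℝ≥0∞) (M : ℝ≥0∞) (hg : ∀ j ∈ D, g j ≤ M)
    (ρ : ℝ) (hρ0 : 0 ≤ ρ) (hρ : ∀ a ∈ D, ∀ u ∈ 𝕌 a, Real.exp (c a u) ≤ ρ) :
    SvE P c D v i g ≤ (1 - ENNReal.ofReal ρ)⁻¹ * M := by
  calc SvE P c D v i g
      ≤ ∑' k : ℕ, ENNReal.ofReal (ρ ^ k) * M :=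
        ENNReal.tsum_le_tsum (inner_sum_le P c 𝕌 hM D v hv i hi g M hg ρ hρ0 hρ)
    _ = (∑' k : ℕ, ENNReal.ofReal ρ ^ k) * M := by
        rw [← ENNReal.tsum_mul_right]
        exact tsum_congr fun k => by rw [ENNReal.ofReal_pow hρ0]
    _ = (1 - ENNReal.ofReal ρ)⁻¹ * M := by rw [ENNReal.tsum_geometric]

lemma geom_ne_top {ρ : ℝ} (hρ1 : ρ < 1) (M : ℝ≥0∞) (hMt : M ≠ ⊤) :
    (1 - ENNReal.ofReal ρ)⁻¹ * M ≠ ⊤ := by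
  refine ENNReal.mul_ne_top ?_ hMt
  refine ENNReal.inv_ne_top.mpr ?_
  rw [ne_eq, tsub_eq_zero_iff_le, not_le]
  exact ENNReal.ofReal_lt_one.mpr hρ1

end Aux3
section Aux4

set_option linter.unusedSectionVars false
set_option maxHeartbeats 1000000

variable {U : Type*} [TopologicalSpace U] [MeasurableSpace U]

/-- Shift of a Markov policy by one time step. -/
def shiftPol (v : ℕ → ℕ → U) : ℕ → ℕ → U := fun t => v (t + 1)

lemma trm_cons (P : ℕ → U → ℕ → ℝ≥0∞) (c : ℕ → U → ℝ) (D : Finset ℕ)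
    (v : ℕ → ℕ → U) (i : ℕ) (g : ℕ → ℝ≥0∞) (k : ℕ) (j : ℕ) (y : Fin (k + 1) → ℕ) :
    trm P c D v i g (k + 1) (Fin.cons j y) =
      (if j = i then 1 else 0) *
        (ENNReal.ofReal (Real.exp (c i (v 0 i))) *
          (if extN k y 0 ∈ D then
              P i (v 0 i) (extN k y 0) * trm P c D (shiftPol v) (extN k y 0) g k y
            else 0)) := by
  have hz0 : extN (k + 1) (Fin.cons j y) 0 = j := extN_cons_zero j y
  have hzs : ∀ t, extN (k + 1) (Fin.cons j y) (t + 1) = extN k y t := extN_cons_succ j y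
  by_cases hj : j = i
  swap
  · rw [if_neg hj, zero_mul]
    unfold trm
    split_ifs with hc
    · rw [pathWeight_mPolicy, hz0, if_neg hj, zero_mul, zero_mul]
    · rfl
  subst hj
  rw [if_pos rfl, one_mul]
  have hcond : (∀ t, 0 < t → t ≤ k + 1 → extN (k + 1) (Fin.cons j y) t ∈ (D : Set ℕ)) ↔
      (extN k y 0 ∈ (D : Set ℕ) ∧ ∀ t, 0 < t → t ≤ k → extN k y t ∈ (D : Set ℕ)) := by
    constructor
    · intro h
      constructor
      · have := h 1 one_pos (by omega)
        rwa [hzs 0] at this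
      · intro t ht htk
        have := h (t + 1) (by omega) (by omega)
        rwa [hzs t] at this
    · rintro ⟨h0, hk⟩ t ht htk
      obtain ⟨s, rfl⟩ : ∃ s, t = s + 1 := ⟨t - 1, by omega⟩
      rw [hzs s]
      rcases Nat.eq_zero_or_pos s with h | h
      · rw [h]; exact h0
      · exact hk s h (by omega)
  have hpw : pathWeight P (mPolicy v) j (k + 1) (extN (k + 1) (Fin.cons j y)) =
      P j (v 0 j) (extN k y 0) *
        pathWeight P (mPolicy (shiftPol v)) (extN k y 0) k (extN k y) := by
    rw [pathWeight_mPolicy, pathWeight_mPolicy, hz0, if_pos rfl, if_pos rfl, one_mul, one_mul]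
    rw [Finset.prod_range_succ']
    have h1 : ∀ t ∈ Finset.range k,
        P (extN (k + 1) (Fin.cons j y) (t + 1)) (v (t + 1) (extN (k + 1) (Fin.cons j y) (t + 1)))
            (extN (k + 1) (Fin.cons j y) (t + 1 + 1)) =
          P (extN k y t) (shiftPol v t (extN k y t)) (extN k y (t + 1)) := by
      intro t _
      rw [hzs t, hzs (t + 1)]
      rfl
    rw [Finset.prod_congr rfl h1, hz0, hzs 0]
    ring
  have hcost : (∑ t ∈ Finset.range (k + 1),
        c (extN (k + 1) (Fin.cons j y) t) (v t (extN (k + 1) (Fin.cons j y) t))) =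
      (∑ t ∈ Finset.range k, c (extN k y t) (shiftPol v t (extN k y t))) + c j (v 0 j) := by
    rw [Finset.sum_range_succ', hz0]
    congr 1
    refine Finset.sum_congr rfl fun t _ => ?_
    rw [hzs t]
    simp [shiftPol]
  have hg' : extN (k + 1) (Fin.cons j y) (k + 1) = extN k y k := hzs k
  unfold trm
  rw [hcost, hg', hpw]
  by_cases h0 : extN k y 0 ∈ D
  · by_cases hC : ∀ t, 0 < t → t ≤ k → extN k y t ∈ (D : Set ℕ)
    · rw [if_pos (hcond.mpr ⟨h0, hC⟩), if_pos h0, if_pos hC]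
      rw [Real.exp_add, ENNReal.ofReal_mul (Real.exp_nonneg _)]
      ring
    · rw [if_neg (fun h => hC (hcond.mp h).2), if_pos h0, if_neg hC]
      simp
  · rw [if_neg (fun h => h0 (hcond.mp h).1), if_neg h0]
    simp

lemma SvE_rec (P : ℕ → U → ℕ → ℝ≥0∞) (c : ℕ → U → ℝ) (D : Finset ℕ)
    (v : ℕ → ℕ → U) (i : ℕ) (g : ℕ → ℝ≥0∞) :
    SvE P c D v i g = g i + ENNReal.ofReal (Real.exp (c i (v 0 i))) *
      ∑' j, (if j ∈ D then P i (v 0 i) j * SvE P c D (shiftPol v) j g else 0) := by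
  unfold SvE
  rw [tsum_eq_zero_add' ENNReal.summable, trm_zero_sum]
  congr 1
  have hk : ∀ k : ℕ, (∑' x : Fin (k + 1 + 1) → ℕ, trm P c D v i g (k + 1) x) =
      ENNReal.ofReal (Real.exp (c i (v 0 i))) *
        ∑' y : Fin (k + 1) → ℕ,
          (if extN k y 0 ∈ D then
              P i (v 0 i) (extN k y 0) * trm P c D (shiftPol v) (extN k y 0) g k y
            else 0) := by
    intro k
    rw [← (Fin.consEquiv (fun _ : Fin (k + 2) => ℕ)).tsum_eq
      (fun x : Fin (k + 2) → ℕ => trm P c D v i g (k + 1) x)]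
    rw [ENNReal.tsum_prod']
    have h1 : ∀ j : ℕ, (∑' y : Fin (k + 1) → ℕ,
        trm P c D v i g (k + 1) ((Fin.consEquiv (fun _ : Fin (k + 2) => ℕ)) (j, y))) =
        (if j = i then 1 else 0) *
          (ENNReal.ofReal (Real.exp (c i (v 0 i))) *
            ∑' y : Fin (k + 1) → ℕ,
              (if extN k y 0 ∈ D then
                  P i (v 0 i) (extN k y 0) * trm P c D (shiftPol v) (extN k y 0) g k y
                else 0)) := by
      intro j
      rw [← ENNReal.tsum_mul_left, ← ENNReal.tsum_mul_left]
      refine tsum_congr fun y => ?_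
      have : (Fin.consEquiv (fun _ : Fin (k + 2) => ℕ)) (j, y) = Fin.cons j y := rfl
      rw [this, trm_cons]
    rw [tsum_congr h1, tsum_eq_single i]
    · rw [if_pos rfl, one_mul]
    · intro b hb
      rw [if_neg hb, zero_mul]
  rw [tsum_congr hk, ENNReal.tsum_mul_left]
  congr 1
  have h3 : ∀ (k : ℕ) (y : Fin (k + 1) → ℕ) (j : ℕ),
      (if j ∈ D then P i (v 0 i) j * trm P c D (shiftPol v) j g k y else 0) =
      if j = extN k y 0 then
        (if extN k y 0 ∈ D then
            P i (v 0 i) (extN k y 0) * trm P c D (shiftPol v) (extN k y 0) g k y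
          else 0)
      else 0 := by
    intro k y j
    by_cases hjy : j = extN k y 0
    · subst hjy
      rw [if_pos rfl]
    · rw [if_neg hjy]
      by_cases hj : j ∈ D
      · rw [if_pos hj, trm_indicator, if_neg (fun h => hjy h.symm), zero_mul, mul_zero]
      · rw [if_neg hj]
  have h2 : ∀ j : ℕ,
      (if j ∈ D then P i (v 0 i) j * ∑' (k : ℕ) (x : Fin (k + 1) → ℕ),
          trm P c D (shiftPol v) j g k x else 0) =
      ∑' (k : ℕ) (y : Fin (k + 1) → ℕ),
        (if j ∈ D then P i (v 0 i) j * trm P c D (shiftPol v) j g k y else 0) := by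
    intro j
    by_cases hj : j ∈ D
    · simp only [if_pos hj]
      rw [← ENNReal.tsum_mul_left]
      exact tsum_congr fun k => by rw [← ENNReal.tsum_mul_left]
    · simp only [if_neg hj, tsum_zero]
  calc (∑' (k : ℕ) (y : Fin (k + 1) → ℕ),
          if extN k y 0 ∈ D then
            P i (v 0 i) (extN k y 0) * trm P c D (shiftPol v) (extN k y 0) g k y
          else 0)
      = ∑' (k : ℕ) (y : Fin (k + 1) → ℕ) (j : ℕ),
          (if j ∈ D then P i (v 0 i) j * trm P c D (shiftPol v) j g k y else 0) := by
        refine tsum_congr fun k => tsum_congr fun y => ?_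
        rw [tsum_congr (h3 k y), tsum_ite_eq]
    _ = ∑' (k : ℕ) (j : ℕ) (y : Fin (k + 1) → ℕ),
          (if j ∈ D then P i (v 0 i) j * trm P c D (shiftPol v) j g k y else 0) :=
        tsum_congr fun k => ENNReal.tsum_comm
    _ = ∑' (j : ℕ) (k : ℕ) (y : Fin (k + 1) → ℕ),
          (if j ∈ D then P i (v 0 i) j * trm P c D (shiftPol v) j g k y else 0) :=
        ENNReal.tsum_comm
    _ = ∑' (j : ℕ), (if j ∈ D then P i (v 0 i) j * SvE P c D (shiftPol v) j g else 0) :=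
        (tsum_congr fun j => h2 j).symm

end Aux4
section Aux5

set_option linter.unusedSectionVars false
set_option maxHeartbeats 1000000

variable {U : Type*} [TopologicalSpace U] [MeasurableSpace U]

lemma tsum_toReal_sub {ι : Type*} (F G : ι → ℝ≥0∞) (hF : ∑' a, F a ≠ ⊤) (hG : ∑' a, G a ≠ ⊤) :
    ∑' a, ((F a).toReal - (G a).toReal) = (∑' a, F a).toReal - (∑' a, G a).toReal := by
  rw [ENNReal.tsum_toReal_eq (fun a => ne_top_of_le_ne_top hF (ENNReal.le_tsum a)),
    ENNReal.tsum_toReal_eq (fun a => ne_top_of_le_ne_top hG (ENNReal.le_tsum a))]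
  exact Summable.tsum_sub (ENNReal.summable_toReal hF) (ENNReal.summable_toReal hG)

/-- The real-valued Dirichlet sum as a difference of two `ℝ≥0∞` sums. -/
noncomputable def Gv (P : ℕ → U → ℕ → ℝ≥0∞) (c : ℕ → U → ℝ) (D : Finset ℕ)
    (f : ℕ → ℝ) (v : ℕ → ℕ → U) (i : ℕ) : ℝ :=
  (SvE P c D v i (fun j => ENNReal.ofReal (f j))).toReal -
    (SvE P c D v i (fun j => ENNReal.ofReal (-f j))).toReal

/-- Standing context for the Dirichlet problem with negative costs on `D`. -/
structure Ctx (P : ℕ → U → ℕ → ℝ≥0∞) (c : ℕ → U → ℝ) (𝕌 : ℕ → Set U)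
    (D : Finset ℕ) (f : ℕ → ℝ) (ρ Mf : ℝ) : Prop where
  hM : Model P c 𝕌
  hρ0 : 0 ≤ ρ
  hρ1 : ρ < 1
  hρ : ∀ a ∈ D, ∀ u ∈ 𝕌 a, Real.exp (c a u) ≤ ρ
  hMf0 : 0 ≤ Mf
  hMf : ∀ j ∈ D, |f j| ≤ Mf

namespace Ctx

variable {P : ℕ → U → ℕ → ℝ≥0∞} {c : ℕ → U → ℝ} {𝕌 : ℕ → Set U}
  {D : Finset ℕ} {f : ℕ → ℝ} {ρ Mf : ℝ}

lemma gplus_le (hC : Ctx P c 𝕌 D f ρ Mf) : ∀ j ∈ D, ENNReal.ofReal (f j) ≤ ENNReal.ofReal Mf :=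
  fun j hj => ENNReal.ofReal_le_ofReal ((le_abs_self _).trans (hC.hMf j hj))

lemma gminus_le (hC : Ctx P c 𝕌 D f ρ Mf) : ∀ j ∈ D, ENNReal.ofReal (-f j) ≤ ENNReal.ofReal Mf :=
  fun j hj => ENNReal.ofReal_le_ofReal ((neg_le_abs _).trans (hC.hMf j hj))

lemma SvE_plus_ne_top (hC : Ctx P c 𝕌 D f ρ Mf) (v : ℕ → ℕ → U) (hv : ∀ t j, v t j ∈ 𝕌 j)
    {i : ℕ} (hi : i ∈ D) : SvE P c D v i (fun j => ENNReal.ofReal (f j)) ≠ ⊤ :=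
  ne_top_of_le_ne_top (geom_ne_top hC.hρ1 _ ENNReal.ofReal_ne_top)
    (SvE_le P c 𝕌 hC.hM D v hv i hi _ _ (hC.gplus_le) ρ hC.hρ0 hC.hρ)

lemma SvE_minus_ne_top (hC : Ctx P c 𝕌 D f ρ Mf) (v : ℕ → ℕ → U) (hv : ∀ t j, v t j ∈ 𝕌 j)
    {i : ℕ} (hi : i ∈ D) : SvE P c D v i (fun j => ENNReal.ofReal (-f j)) ≠ ⊤ :=
  ne_top_of_le_ne_top (geom_ne_top hC.hρ1 _ ENNReal.ofReal_ne_top)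
    (SvE_le P c 𝕌 hC.hM D v hv i hi _ _ (hC.gminus_le) ρ hC.hρ0 hC.hρ)

/-- The bound `Mf / (1 - ρ)` on the value functions. -/
noncomputable def CB (hC : Ctx P c 𝕌 D f ρ Mf) : ℝ :=
  ((1 - ENNReal.ofReal ρ)⁻¹ * ENNReal.ofReal Mf).toReal

lemma CB_nonneg (hC : Ctx P c 𝕌 D f ρ Mf) : 0 ≤ hC.CB := ENNReal.toReal_nonneg

lemma abs_Gv_le (hC : Ctx P c 𝕌 D f ρ Mf) (v : ℕ → ℕ → U) (hv : ∀ t j, v t j ∈ 𝕌 j)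
    {i : ℕ} (hi : i ∈ D) : |Gv P c D f v i| ≤ hC.CB := by
  have hb : ∀ g : ℕ → ℝ≥0∞, (∀ j ∈ D, g j ≤ ENNReal.ofReal Mf) →
      (SvE P c D v i g).toReal ≤ hC.CB := by
    intro g hg
    refine (ENNReal.toReal_le_toReal
      (ne_top_of_le_ne_top (geom_ne_top hC.hρ1 _ ENNReal.ofReal_ne_top)
        (SvE_le P c 𝕌 hC.hM D v hv i hi _ _ hg ρ hC.hρ0 hC.hρ))
      (geom_ne_top hC.hρ1 _ ENNReal.ofReal_ne_top)).mpr ?_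
    exact SvE_le P c 𝕌 hC.hM D v hv i hi _ _ hg ρ hC.hρ0 hC.hρ
  have h1 := hb _ hC.gplus_le
  have h2 := hb _ hC.gminus_le
  rw [Gv, abs_sub_le_iff]
  constructor
  · linarith [ENNReal.toReal_nonneg
      (a := SvE P c D v i (fun j => ENNReal.ofReal (-f j)))]
  · linarith [ENNReal.toReal_nonneg
      (a := SvE P c D v i (fun j => ENNReal.ofReal (f j)))]

/-- `dirichletSum` coincides with the difference `Gv` of the two
`ℝ≥0∞`-valued sums. -/
lemma dirichletSum_eq (hC : Ctx P c 𝕌 D f ρ Mf) (v : ℕ → ℕ → U) (hv : ∀ t j, v t j ∈ 𝕌 j)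
    {i : ℕ} (hi : i ∈ D) :
    dirichletSum P c (mPolicy v) i ↑D f = Gv P c D f v i := by
  have hterm : ∀ (k : ℕ) (x : Fin (k + 1) → ℕ),
      (if ∀ t, 0 < t → t ≤ k → extN k x t ∈ (D : Set ℕ) then
        (pathWeight P (mPolicy v) i k (extN k x)).toReal *
          Real.exp (∑ t ∈ Finset.range k, c (extN k x t) (act (mPolicy v) (extN k x) t)) *
          f (extN k x k)
      else 0) =
      (trm P c D v i (fun j => ENNReal.ofReal (f j)) k x).toReal -
        (trm P c D v i (fun j => ENNReal.ofReal (-f j)) k x).toReal := by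
    intro k x
    have hpw : pathWeight P (mPolicy v) i k (extN k x) ≠ ⊤ :=
      ne_top_of_le_ne_top ENNReal.one_ne_top (pw_le_one P c 𝕌 hC.hM v hv i k _)
    unfold trm
    split_ifs with hcnd
    · simp only [act_mPolicy]
      rw [ENNReal.toReal_mul, ENNReal.toReal_mul, ENNReal.toReal_mul, ENNReal.toReal_mul,
        ENNReal.toReal_ofReal (Real.exp_nonneg _), ENNReal.toReal_ofReal',
        ENNReal.toReal_ofReal']
      have := max_zero_sub_max_neg_zero_eq_self (f (extN k x k))
      set a := (pathWeight P (mPolicy v) i k (extN k x)).toReal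
      set e := Real.exp (∑ t ∈ Finset.range k, c (extN k x t) (v t (extN k x t)))
      calc a * e * f (extN k x k)
          = a * (e * (f (extN k x k) ⊔ 0)) - a * (e * (-f (extN k x k) ⊔ 0)) := by
            rw [← mul_sub, ← mul_sub, this]; ring
        _ = _ := by ring
    · simp
  have hAne : ∀ (g : ℕ → ℝ≥0∞), (∀ j ∈ D, g j ≤ ENNReal.ofReal Mf) → ∀ k : ℕ,
      (∑' x : Fin (k + 1) → ℕ, trm P c D v i g k x) ≠ ⊤ := by
    intro g hg k
    exact ne_top_of_le_ne_top (by simp [ENNReal.mul_ne_top])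
      (inner_sum_le P c 𝕌 hC.hM D v hv i hi g _ hg ρ hC.hρ0 hC.hρ k)
  have hinner : ∀ k : ℕ,
      (∑' x : Fin (k + 1) → ℕ,
        ((trm P c D v i (fun j => ENNReal.ofReal (f j)) k x).toReal -
          (trm P c D v i (fun j => ENNReal.ofReal (-f j)) k x).toReal)) =
      (∑' x : Fin (k + 1) → ℕ, trm P c D v i (fun j => ENNReal.ofReal (f j)) k x).toReal -
        (∑' x : Fin (k + 1) → ℕ, trm P c D v i (fun j => ENNReal.ofReal (-f j)) k x).toReal :=
    fun k => tsum_toReal_sub _ _ (hAne _ hC.gplus_le k) (hAne _ hC.gminus_le k)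
  unfold dirichletSum
  calc (∑' (k : ℕ) (x : Fin (k + 1) → ℕ), if ∀ t, 0 < t → t ≤ k → extN k x t ∈ (D : Set ℕ) then
        (pathWeight P (mPolicy v) i k (extN k x)).toReal *
          Real.exp (∑ t ∈ Finset.range k, c (extN k x t) (act (mPolicy v) (extN k x) t)) *
          f (extN k x k) else 0)
      = ∑' (k : ℕ),
          ((∑' x : Fin (k + 1) → ℕ, trm P c D v i (fun j => ENNReal.ofReal (f j)) k x).toReal -
          (∑' x : Fin (k + 1) → ℕ, trm P c D v i (fun j => ENNReal.ofReal (-f j)) k x).toReal) := by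
        refine tsum_congr fun k => ?_
        rw [tsum_congr (hterm k), hinner k]
    _ = Gv P c D f v i := by
        rw [tsum_toReal_sub _ _ (hC.SvE_plus_ne_top v hv hi) (hC.SvE_minus_ne_top v hv hi)]
        rfl

end Ctx

end Aux5
section Aux6

set_option linter.unusedSectionVars false
set_option maxHeartbeats 1000000

variable {U : Type*} [TopologicalSpace U] [MeasurableSpace U]

lemma P_ne_top {P : ℕ → U → ℕ → ℝ≥0∞} {c : ℕ → U → ℝ} {𝕌 : ℕ → Set U} (hM : Model P c 𝕌)
    {i : ℕ} {u : U} (hu : u ∈ 𝕌 i) (j : ℕ) : P i u j ≠ ⊤ :=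
  ne_top_of_le_ne_top ENNReal.one_ne_top
    ((ENNReal.le_tsum j).trans (hM.prob i u hu).le)

lemma sumP_le_one {P : ℕ → U → ℕ → ℝ≥0∞} {c : ℕ → U → ℝ} {𝕌 : ℕ → Set U} (hM : Model P c 𝕌)
    (D : Finset ℕ) {i : ℕ} {u : U} (hu : u ∈ 𝕌 i) :
    ∑ j ∈ D, (P i u j).toReal ≤ 1 := by
  rw [← ENNReal.toReal_sum (fun j _ => P_ne_top hM hu j)]
  rw [show (1 : ℝ) = (1 : ℝ≥0∞).toReal by simp]
  refine ENNReal.toReal_mono ENNReal.one_ne_top ?_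
  rw [← hM.prob i u hu]
  exact ENNReal.sum_le_tsum D

namespace Ctx

variable {P : ℕ → U → ℕ → ℝ≥0∞} {c : ℕ → U → ℝ} {𝕌 : ℕ → Set U}
  {D : Finset ℕ} {f : ℕ → ℝ} {ρ Mf : ℝ}

lemma Gv_rec (hC : Ctx P c 𝕌 D f ρ Mf) (v : ℕ → ℕ → U) (hv : ∀ t j, v t j ∈ 𝕌 j) (i : ℕ) :
    Gv P c D f v i = f i + Real.exp (c i (v 0 i)) *
      ∑ j ∈ D, (P i (v 0 i) j).toReal * Gv P c D f (shiftPol v) j := by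
  have hvs : ∀ t j, shiftPol v t j ∈ 𝕌 j := fun t j => hv (t + 1) j
  have key : ∀ g : ℕ → ℝ≥0∞, (∀ j ∈ D, g j ≤ ENNReal.ofReal Mf) → g i ≠ ⊤ →
      (SvE P c D v i g).toReal = (g i).toReal + Real.exp (c i (v 0 i)) *
        ∑ j ∈ D, (P i (v 0 i) j).toReal * (SvE P c D (shiftPol v) j g).toReal := by
    intro g hg hgi
    have hSne : ∀ j ∈ D, SvE P c D (shiftPol v) j g ≠ ⊤ := fun j hj =>
      ne_top_of_le_ne_top (geom_ne_top hC.hρ1 _ ENNReal.ofReal_ne_top)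
        (SvE_le P c 𝕌 hC.hM D (shiftPol v) hvs j hj g _ hg ρ hC.hρ0 hC.hρ)
    have hsum : (∑' j, (if j ∈ D then P i (v 0 i) j * SvE P c D (shiftPol v) j g else 0)) =
        ∑ j ∈ D, P i (v 0 i) j * SvE P c D (shiftPol v) j g := by
      rw [tsum_eq_sum (s := D) (fun b hb => if_neg hb)]
      exact Finset.sum_congr rfl fun j hj => if_pos hj
    have hsne : (∑ j ∈ D, P i (v 0 i) j * SvE P c D (shiftPol v) j g) ≠ ⊤ := by
      rw [← lt_top_iff_ne_top]
      refine ENNReal.sum_lt_top.mpr fun j hj => lt_top_iff_ne_top.mpr ?_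
      exact ENNReal.mul_ne_top (P_ne_top hC.hM (hv 0 i) j) (hSne j hj)
    rw [SvE_rec P c D v i g, hsum,
      ENNReal.toReal_add hgi (ENNReal.mul_ne_top ENNReal.ofReal_ne_top hsne),
      ENNReal.toReal_mul, ENNReal.toReal_ofReal (Real.exp_nonneg _),
      ENNReal.toReal_sum (fun j hj =>
        ENNReal.mul_ne_top (P_ne_top hC.hM (hv 0 i) j) (hSne j hj))]
    congr 2
    exact Finset.sum_congr rfl fun j _ => ENNReal.toReal_mul
  rw [Gv, key _ hC.gplus_le ENNReal.ofReal_ne_top, key _ hC.gminus_le ENNReal.ofReal_ne_top,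
    ENNReal.toReal_ofReal', ENNReal.toReal_ofReal']
  have : ∀ j ∈ D, (P i (v 0 i) j).toReal *
        (SvE P c D (shiftPol v) j fun j => ENNReal.ofReal (f j)).toReal -
      (P i (v 0 i) j).toReal *
        (SvE P c D (shiftPol v) j fun j => ENNReal.ofReal (-f j)).toReal =
      (P i (v 0 i) j).toReal * Gv P c D f (shiftPol v) j := fun j _ => by
    rw [Gv]; ring
  rw [← sub_sub, show ∀ a b d e : ℝ, a + b - d - e = (a - d) + (b - e) by intros; ring,
    max_zero_sub_max_neg_zero_eq_self, ← mul_sub, ← Finset.sum_sub_distrib,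
    Finset.sum_congr rfl this]

end Ctx

/-- Attainment of the infimum of a continuous function on a compact set. -/
lemma sInf_image_attained {K : Set U} (hK : IsCompact K) (hne : K.Nonempty)
    {g : U → ℝ} (hg : ContinuousOn g K) :
    ∃ u₀ ∈ K, sInf (g '' K) = g u₀ ∧ ∀ u ∈ K, g u₀ ≤ g u := by
  obtain ⟨u₀, hu₀, hmin⟩ := hK.exists_isMinOn hne hg
  refine ⟨u₀, hu₀, ?_, fun u hu => hmin hu⟩
  refine IsLeast.csInf_eq ⟨Set.mem_image_of_mem _ hu₀, ?_⟩
  rintro - ⟨u, hu, rfl⟩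
  exact hmin hu

/-- Comparison of infima of uniformly close functions on a compact set. -/
lemma abs_sInf_image_sub {K : Set U} (hK : IsCompact K) (hne : K.Nonempty)
    {g h : U → ℝ} (hg : ContinuousOn g K) (hh : ContinuousOn h K)
    {ε : ℝ} (hgh : ∀ u ∈ K, |g u - h u| ≤ ε) :
    |sInf (g '' K) - sInf (h '' K)| ≤ ε := by
  obtain ⟨ug, hug, hgeq, hgmin⟩ := sInf_image_attained hK hne hg
  obtain ⟨uh, huh, hheq, hhmin⟩ := sInf_image_attained hK hne hh
  rw [hgeq, hheq, abs_sub_le_iff]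
  constructor
  · have h1 : g ug ≤ g uh := hgmin uh huh
    have h2 : g uh - h uh ≤ ε := (abs_sub_le_iff.mp (hgh uh huh)).1
    linarith
  · have h1 : h uh ≤ h ug := hhmin ug hug
    have h2 : h ug - g ug ≤ ε := (abs_sub_le_iff.mp (hgh ug hug)).2
    linarith

end Aux6
section Aux7

set_option linter.unusedSectionVars false
set_option maxHeartbeats 1000000

variable {U : Type*} [TopologicalSpace U] [MeasurableSpace U]

/-- Extension by zero of a function on `D` to all of `ℕ`. -/
noncomputable def extD (D : Finset ℕ) (ψ : ↥D → ℝ) : ℕ → ℝ :=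
  fun j => if h : j ∈ D then ψ ⟨j, h⟩ else 0

lemma extD_bdd (D : Finset ℕ) (ψ : ↥D → ℝ) : ∃ M, ∀ j, |extD D ψ j| ≤ M := by
  refine ⟨∑ j ∈ D, |extD D ψ j|, fun j => ?_⟩
  by_cases hj : j ∈ D
  · exact Finset.single_le_sum (f := fun j => |extD D ψ j|) (fun _ _ => abs_nonneg _) hj
  · rw [extD, dif_neg hj, abs_zero]
    exact Finset.sum_nonneg fun _ _ => abs_nonneg _

/-- The one-step Bellman operator on functions on `D`. -/
noncomputable def Tmap (P : ℕ → U → ℕ → ℝ≥0∞) (c : ℕ → U → ℝ) (𝕌 : ℕ → Set U)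
    (D : Finset ℕ) (f : ℕ → ℝ) (ψ : ↥D → ℝ) : ↥D → ℝ :=
  fun i => sInf ((fun u => Real.exp (c ↑i u) *
    (∑' j, extD D ψ j * (P ↑i u j).toReal) + f ↑i) '' 𝕌 ↑i)

variable {P : ℕ → U → ℕ → ℝ≥0∞} {c : ℕ → U → ℝ} {𝕌 : ℕ → Set U}
  {D : Finset ℕ} {f : ℕ → ℝ} {ρ Mf : ℝ}

lemma tsum_vanish (hM : Model P c 𝕌) (φ : ℕ → ℝ) (hφ : ∀ j ∉ D, φ j = 0) (i : ℕ) (u : U) :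
    ∑' j, φ j * (P i u j).toReal = ∑ j ∈ D, φ j * (P i u j).toReal :=
  tsum_eq_sum fun b hb => by rw [hφ b hb, zero_mul]

lemma objCont (hA1a : A1a P c 𝕌) (φ : ℕ → ℝ) (hb : ∃ M, ∀ j, |φ j| ≤ M) (i : ℕ) :
    ContinuousOn (fun u => Real.exp (c i u) * (∑' j, φ j * (P i u j).toReal) + f i) (𝕌 i) :=
  ((Real.continuous_exp.comp_continuousOn (hA1a.cCont i)).mul
    (hA1a.PCont i φ hb)).add continuousOn_const

lemma Tmap_contract (hC : Ctx P c 𝕌 D f ρ Mf) (hA1a : A1a P c 𝕌) (ψ ψ' : ↥D → ℝ) :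
    dist (Tmap P c 𝕌 D f ψ) (Tmap P c 𝕌 D f ψ') ≤ ρ * dist ψ ψ' := by
  rw [dist_pi_le_iff (mul_nonneg hC.hρ0 dist_nonneg)]
  intro i
  rw [Real.dist_eq]
  refine abs_sInf_image_sub (hC.hM.compact _) (hC.hM.nonempty _)
    (objCont hA1a _ (extD_bdd D ψ) _) (objCont hA1a _ (extD_bdd D ψ') _) ?_
  intro u hu
  set S := ∑' j, extD D ψ j * (P ↑i u j).toReal with hS
  set S' := ∑' j, extD D ψ' j * (P ↑i u j).toReal with hS'
  have hdiff : S - S' = ∑ j ∈ D, (extD D ψ j - extD D ψ' j) * (P ↑i u j).toReal := by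
    rw [hS, hS', tsum_vanish hC.hM _ (fun j hj => by rw [extD, dif_neg hj]) _ u,
      tsum_vanish hC.hM _ (fun j hj => by rw [extD, dif_neg hj]) _ u,
      ← Finset.sum_sub_distrib]
    exact Finset.sum_congr rfl fun j _ => (sub_mul _ _ _).symm
  have habs : |S - S'| ≤ dist ψ ψ' := by
    rw [hdiff]
    calc |∑ j ∈ D, (extD D ψ j - extD D ψ' j) * (P ↑i u j).toReal|
        ≤ ∑ j ∈ D, |(extD D ψ j - extD D ψ' j) * (P ↑i u j).toReal| :=
          Finset.abs_sum_le_sum_abs _ _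
      _ ≤ ∑ j ∈ D, dist ψ ψ' * (P ↑i u j).toReal := by
          refine Finset.sum_le_sum fun j hj => ?_
          rw [abs_mul, abs_of_nonneg ENNReal.toReal_nonneg]
          refine mul_le_mul_of_nonneg_right ?_ ENNReal.toReal_nonneg
          have : extD D ψ j - extD D ψ' j = ψ ⟨j, hj⟩ - ψ' ⟨j, hj⟩ := by
            rw [extD, extD, dif_pos hj, dif_pos hj]
          rw [this, ← Real.dist_eq]
          exact dist_le_pi_dist ψ ψ' ⟨j, hj⟩
      _ = dist ψ ψ' * ∑ j ∈ D, (P ↑i u j).toReal := by rw [Finset.mul_sum]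
      _ ≤ dist ψ ψ' * 1 :=
          mul_le_mul_of_nonneg_left (sumP_le_one hC.hM D hu) dist_nonneg
      _ = dist ψ ψ' := mul_one _
  have : (Real.exp (c ↑i u) * S + f ↑i) - (Real.exp (c ↑i u) * S' + f ↑i) =
      Real.exp (c ↑i u) * (S - S') := by ring
  rw [this, abs_mul, abs_of_nonneg (Real.exp_nonneg _)]
  exact mul_le_mul (hC.hρ ↑i i.2 u hu) habs (abs_nonneg _) hC.hρ0

end Aux7
set_option maxHeartbeats 2000000 in
/-- Proposition 2.1.  If `c < 0` on the finite set `D`, the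
Dirichlet problem has a unique solution, given by the stochastic
representation over Markov policies. -/
theorem dirichlet_poisson_equation {U : Type*} [TopologicalSpace U] [MeasurableSpace U]
    (P : ℕ → U → ℕ → ℝ≥0∞) (c : ℕ → U → ℝ) (𝕌 : ℕ → Set U)
    (hM : Model P c 𝕌) (hA1a : A1a P c 𝕌)
    (D : Finset ℕ) (hcneg : ∀ i ∈ D, ∀ u ∈ 𝕌 i, c i u < 0)
    (f : ℕ → ℝ) (hf : ∀ i ∉ D, f i = 0) :
    ∃ φ : ℕ → ℝ,
      ((∀ i ∉ D, φ i = 0) ∧ ∀ i ∈ D,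
        sInf ((fun u => Real.exp (c i u) * (∑' j, φ j * (P i u j).toReal) + f i) '' 𝕌 i)
          = φ i) ∧
      (∀ φ' : ℕ → ℝ,
        ((∀ i ∉ D, φ' i = 0) ∧ ∀ i ∈ D,
          sInf ((fun u => Real.exp (c i u) * (∑' j, φ' j * (P i u j).toReal) + f i) '' 𝕌 i)
            = φ' i) → φ' = φ) ∧
      ∀ i ∈ D, φ i =
        ⨅ v : {v : ℕ → ℕ → U // ∀ t j, v t j ∈ 𝕌 j},
          dirichletSum P c (mPolicy v.1) i ↑D f := by
  classical
  -- a uniform contraction factor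
  obtain ⟨ρ, hρ0, hρ1, hρ⟩ :
      ∃ ρ : ℝ, 0 ≤ ρ ∧ ρ < 1 ∧ ∀ a ∈ D, ∀ u ∈ 𝕌 a, Real.exp (c a u) ≤ ρ := by
    by_cases hD : D.Nonempty
    · have hr : ∀ a ∈ D, ∃ r : ℝ, 0 ≤ r ∧ r < 1 ∧ ∀ u ∈ 𝕌 a, Real.exp (c a u) ≤ r := by
        intro a ha
        obtain ⟨u₀, hu₀, hmax⟩ := (hM.compact a).exists_isMaxOn (hM.nonempty a)
          (Real.continuous_exp.comp_continuousOn (hA1a.cCont a))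
        exact ⟨Real.exp (c a u₀), (Real.exp_pos _).le,
          Real.exp_lt_one_iff.mpr (hcneg a ha u₀ hu₀), fun u hu => hmax hu⟩
      choose! r hr0 hr1 hrb using hr
      refine ⟨D.sup' hD r, ?_, ?_, ?_⟩
      · obtain ⟨a, ha⟩ := hD
        exact (hr0 a ha).trans (Finset.le_sup' r ha)
      · exact (Finset.sup'_lt_iff hD).mpr fun a ha => hr1 a ha
      · intro a ha u hu
        exact (hrb a ha u hu).trans (Finset.le_sup' r ha)
    · exact ⟨1 / 2, by norm_num, by norm_num,
        fun a ha => absurd ⟨a, ha⟩ hD⟩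
  set Mf : ℝ := ∑ j ∈ D, |f j| with hMfdef
  have hMf0 : 0 ≤ Mf := Finset.sum_nonneg fun _ _ => abs_nonneg _
  have hMf : ∀ j ∈ D, |f j| ≤ Mf := fun j hj =>
    Finset.single_le_sum (f := fun j => |f j|) (fun _ _ => abs_nonneg _) hj
  have hC : Ctx P c 𝕌 D f ρ Mf := ⟨hM, hρ0, hρ1, hρ, hMf0, hMf⟩
  -- the fixed point of the Bellman operator
  set K : ℝ≥0 := ⟨ρ, hρ0⟩ with hKdef
  have hK1 : K < 1 := by rw [← NNReal.coe_lt_coe]; exact_mod_cast hρ1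
  have hLip : LipschitzWith K (Tmap P c 𝕌 D f) :=
    LipschitzWith.of_dist_le_mul fun ψ ψ' => Tmap_contract hC hA1a ψ ψ'
  have hcontr : ContractingWith K (Tmap P c 𝕌 D f) := ⟨hK1, hLip⟩
  set ψ0 : ↥D → ℝ := ContractingWith.fixedPoint (Tmap P c 𝕌 D f) hcontr with hψ0
  have hfix : Tmap P c 𝕌 D f ψ0 = ψ0 := hcontr.fixedPoint_isFixedPt
  set φ : ℕ → ℝ := extD D ψ0 with hφdef
  have hvan : ∀ i ∉ D, φ i = 0 := fun i hi => dif_neg hi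
  have heq : ∀ i ∈ D,
      sInf ((fun u => Real.exp (c i u) * (∑' j, φ j * (P i u j).toReal) + f i) '' 𝕌 i)
        = φ i := by
    intro i hi
    have h1 := congrFun hfix ⟨i, hi⟩
    have h2 : φ i = ψ0 ⟨i, hi⟩ := dif_pos hi
    rw [h2]
    exact h1
  -- lower bound and attainment for the Bellman equation
  have hbφ : ∃ M, ∀ j, |φ j| ≤ M := extD_bdd D ψ0
  have hlow : ∀ i ∈ D, ∀ u ∈ 𝕌 i,
      φ i ≤ Real.exp (c i u) * (∑' j, φ j * (P i u j).toReal) + f i := by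
    intro i hi u hu
    rw [← heq i hi]
    obtain ⟨u₀, hu₀, hsinf, hmin⟩ := sInf_image_attained (hM.compact i) (hM.nonempty i)
      (objCont (f := f) hA1a φ hbφ i)
    refine csInf_le ⟨Real.exp (c i u₀) * (∑' j, φ j * (P i u₀ j).toReal) + f i, ?_⟩
      (Set.mem_image_of_mem _ hu)
    rintro - ⟨u', hu', rfl⟩
    exact hmin u' hu'
  have hattain : ∀ i ∈ D, ∃ u₀ ∈ 𝕌 i,
      Real.exp (c i u₀) * (∑' j, φ j * (P i u₀ j).toReal) + f i = φ i := by
    intro i hi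
    obtain ⟨u₀, hu₀, hsinf, hmin⟩ := sInf_image_attained (hM.compact i) (hM.nonempty i)
      (objCont (f := f) hA1a φ hbφ i)
    exact ⟨u₀, hu₀, by rw [← hsinf, heq i hi]⟩
  -- the uniform bound used in the iteration arguments
  set C : ℝ := hC.CB + ∑ j ∈ D, |φ j| with hCdef
  have hC0 : 0 ≤ C := add_nonneg hC.CB_nonneg (Finset.sum_nonneg fun _ _ => abs_nonneg _)
  have habsφ : ∀ i ∈ D, |φ i| ≤ ∑ j ∈ D, |φ j| := fun i hi =>
    Finset.single_le_sum (f := fun j => |φ j|) (fun _ _ => abs_nonneg _) hi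
  have hlim : ∀ a : ℝ, (∀ n : ℕ, a ≤ ρ ^ n * C) → a ≤ 0 := by
    intro a ha
    have h1 : Filter.Tendsto (fun n : ℕ => ρ ^ n * C) Filter.atTop (nhds 0) := by
      have := (tendsto_pow_atTop_nhds_zero_of_lt_one hρ0 hρ1).mul_const C
      simpa using this
    exact ge_of_tendsto h1 (Filter.Eventually.of_forall ha)
  -- (a) the fixed point is a lower bound for all Markov values
  have main : ∀ n : ℕ, ∀ v : ℕ → ℕ → U, (∀ t j, v t j ∈ 𝕌 j) → ∀ i ∈ D,
      φ i - Gv P c D f v i ≤ ρ ^ n * C := by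
    intro n
    induction n with
    | zero =>
      intro v hv i hi
      have h1 := hC.abs_Gv_le v hv hi
      have h2 := habsφ i hi
      have h3 := le_abs_self (φ i)
      have h4 := neg_abs_le (Gv P c D f v i)
      have h5 := (abs_le.mp h1).1
      rw [pow_zero, one_mul, hCdef]
      linarith
    | succ n ih =>
      intro v hv i hi
      have hvs : ∀ t j, shiftPol v t j ∈ 𝕌 j := fun t j => hv (t + 1) j
      have h1 : φ i ≤ Real.exp (c i (v 0 i)) *
          (∑ j ∈ D, φ j * (P i (v 0 i) j).toReal) + f i := by
        have := hlow i hi (v 0 i) (hv 0 i)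
        rwa [tsum_vanish hM φ hvan i (v 0 i)] at this
      have h2 := hC.Gv_rec v hv i
      have h4 : (∑ j ∈ D, φ j * (P i (v 0 i) j).toReal) -
          (∑ j ∈ D, (P i (v 0 i) j).toReal * Gv P c D f (shiftPol v) j) ≤ ρ ^ n * C := by
        rw [← Finset.sum_sub_distrib]
        calc ∑ j ∈ D, (φ j * (P i (v 0 i) j).toReal -
                (P i (v 0 i) j).toReal * Gv P c D f (shiftPol v) j)
            = ∑ j ∈ D, (P i (v 0 i) j).toReal * (φ j - Gv P c D f (shiftPol v) j) :=
              Finset.sum_congr rfl fun j _ => by ring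
          _ ≤ ∑ j ∈ D, (P i (v 0 i) j).toReal * (ρ ^ n * C) :=
              Finset.sum_le_sum fun j hj =>
                mul_le_mul_of_nonneg_left (ih (shiftPol v) hvs j hj) ENNReal.toReal_nonneg
          _ = (∑ j ∈ D, (P i (v 0 i) j).toReal) * (ρ ^ n * C) := by
              rw [← Finset.sum_mul]
          _ ≤ 1 * (ρ ^ n * C) := mul_le_mul_of_nonneg_right
              (sumP_le_one hM D (hv 0 i)) (by positivity)
          _ = ρ ^ n * C := one_mul _
      have h5 : φ i - Gv P c D f v i ≤ Real.exp (c i (v 0 i)) *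
          ((∑ j ∈ D, φ j * (P i (v 0 i) j).toReal) -
            (∑ j ∈ D, (P i (v 0 i) j).toReal * Gv P c D f (shiftPol v) j)) := by
        rw [h2]; ring_nf; linarith [h1]
      calc φ i - Gv P c D f v i
          ≤ Real.exp (c i (v 0 i)) * (ρ ^ n * C) :=
            h5.trans (mul_le_mul_of_nonneg_left h4 (Real.exp_nonneg _))
        _ ≤ ρ * (ρ ^ n * C) := mul_le_mul_of_nonneg_right
            (hρ i hi _ (hv 0 i)) (by positivity)
        _ = ρ ^ (n + 1) * C := by ring
  have hGv_ge : ∀ (v : ℕ → ℕ → U), (∀ t j, v t j ∈ 𝕌 j) → ∀ i ∈ D,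
      φ i ≤ Gv P c D f v i := by
    intro v hv i hi
    have := hlim _ (fun n => main n v hv i hi)
    linarith
  -- (b) an optimal stationary selector
  have hsel : ∀ i : ℕ, ∃ u, u ∈ 𝕌 i ∧ (i ∈ D →
      Real.exp (c i u) * (∑' j, φ j * (P i u j).toReal) + f i = φ i) := by
    intro i
    by_cases hi : i ∈ D
    · obtain ⟨u₀, hu₀, hv⟩ := hattain i hi
      exact ⟨u₀, hu₀, fun _ => hv⟩
    · obtain ⟨u₀, hu₀⟩ := hM.nonempty i
      exact ⟨u₀, hu₀, fun h => absurd h hi⟩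
  choose sel hsel1 hsel2 using hsel
  set vstar : ℕ → ℕ → U := fun _ j => sel j with hvstar
  have hvadm : ∀ t j, vstar t j ∈ 𝕌 j := fun t j => hsel1 j
  have hshift : shiftPol vstar = vstar := rfl
  have main2 : ∀ n : ℕ, ∀ i ∈ D, |Gv P c D f vstar i - φ i| ≤ ρ ^ n * C := by
    intro n
    induction n with
    | zero =>
      intro i hi
      have h1 := hC.abs_Gv_le vstar hvadm hi
      have h2 := habsφ i hi
      have h3 := abs_sub (Gv P c D f vstar i) (φ i)
      rw [pow_zero, one_mul, hCdef]
      linarith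
    | succ n ih =>
      intro i hi
      have h1 : Real.exp (c i (sel i)) *
          (∑ j ∈ D, φ j * (P i (sel i) j).toReal) + f i = φ i := by
        have := hsel2 i hi
        rwa [tsum_vanish hM φ hvan i (sel i)] at this
      have h2 := hC.Gv_rec vstar hvadm i
      rw [hshift] at h2
      have h5 : Gv P c D f vstar i - φ i = Real.exp (c i (sel i)) *
          ((∑ j ∈ D, (P i (sel i) j).toReal * Gv P c D f vstar j) -
            (∑ j ∈ D, φ j * (P i (sel i) j).toReal)) := by
        rw [h2, ← h1]; ring
      have h4 : |(∑ j ∈ D, (P i (sel i) j).toReal * Gv P c D f vstar j) -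
          (∑ j ∈ D, φ j * (P i (sel i) j).toReal)| ≤ ρ ^ n * C := by
        rw [← Finset.sum_sub_distrib]
        calc |∑ j ∈ D, ((P i (sel i) j).toReal * Gv P c D f vstar j -
                φ j * (P i (sel i) j).toReal)|
            ≤ ∑ j ∈ D, |(P i (sel i) j).toReal * (Gv P c D f vstar j - φ j)| := by
              refine le_trans (le_of_eq ?_) (Finset.abs_sum_le_sum_abs _ _)
              congr 1
              exact Finset.sum_congr rfl fun j _ => by ring
          _ ≤ ∑ j ∈ D, (P i (sel i) j).toReal * (ρ ^ n * C) := by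
              refine Finset.sum_le_sum fun j hj => ?_
              rw [abs_mul, abs_of_nonneg ENNReal.toReal_nonneg]
              exact mul_le_mul_of_nonneg_left (ih j hj) ENNReal.toReal_nonneg
          _ = (∑ j ∈ D, (P i (sel i) j).toReal) * (ρ ^ n * C) := by
              rw [← Finset.sum_mul]
          _ ≤ 1 * (ρ ^ n * C) := mul_le_mul_of_nonneg_right
              (sumP_le_one hM D (hsel1 i)) (by positivity)
          _ = ρ ^ n * C := one_mul _
      calc |Gv P c D f vstar i - φ i|
          = Real.exp (c i (sel i)) * |(∑ j ∈ D, (P i (sel i) j).toReal *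
              Gv P c D f vstar j) - (∑ j ∈ D, φ j * (P i (sel i) j).toReal)| := by
            rw [h5, abs_mul, abs_of_nonneg (Real.exp_nonneg _)]
        _ ≤ ρ * (ρ ^ n * C) := mul_le_mul (hρ i hi _ (hsel1 i)) h4
            (abs_nonneg _) hρ0
        _ = ρ ^ (n + 1) * C := by ring
  have hGv_star : ∀ i ∈ D, Gv P c D f vstar i = φ i := by
    intro i hi
    have h1 := hlim _ (fun n => main2 n i hi)
    have h2 := abs_nonneg (Gv P c D f vstar i - φ i)
    have : |Gv P c D f vstar i - φ i| = 0 := le_antisymm h1 h2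
    have := abs_eq_zero.mp this
    linarith
  -- assemble
  refine ⟨φ, ⟨hvan, heq⟩, ?_, ?_⟩
  · rintro φ' ⟨hvan', heq'⟩
    set ψ' : ↥D → ℝ := fun i => φ' ↑i with hψ'
    have hext : extD D ψ' = φ' := by
      funext j
      by_cases hj : j ∈ D
      · exact dif_pos hj
      · rw [extD, dif_neg hj, hvan' j hj]
    have hfix' : Function.IsFixedPt (Tmap P c 𝕌 D f) ψ' := by
      funext i
      show sInf _ = ψ' i
      rw [show (fun u => Real.exp (c ↑i u) * (∑' j, extD D ψ' j * (P ↑i u j).toReal) + f ↑i)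
          = fun u => Real.exp (c ↑i u) * (∑' j, φ' j * (P ↑i u j).toReal) + f ↑i by
        rw [hext]]
      exact heq' ↑i i.2
    have h1 : ψ' = ψ0 := hcontr.fixedPoint_unique hfix'
    rw [← hext, h1, ← hφdef]
  · intro i hi
    have hne : Nonempty {v : ℕ → ℕ → U // ∀ t j, v t j ∈ 𝕌 j} := ⟨⟨vstar, hvadm⟩⟩
    refine le_antisymm ?_ ?_
    · refine le_ciInf fun v => ?_
      rw [hC.dirichletSum_eq v.1 v.2 hi]
      exact hGv_ge v.1 v.2 i hi
    · have hbdd : BddBelow (Set.range fun v : {v : ℕ → ℕ → U // ∀ t j, v t j ∈ 𝕌 j} =>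
          dirichletSum P c (mPolicy v.1) i ↑D f) := by
        refine ⟨φ i, ?_⟩
        rintro - ⟨v, rfl⟩
        have h2 := hGv_ge v.1 v.2 i hi
        rw [← hC.dirichletSum_eq v.1 v.2 hi] at h2
        exact h2
      have h1 := ciInf_le hbdd (⟨vstar, hvadm⟩ : {v : ℕ → ℕ → U // ∀ t j, v t j ∈ 𝕌 j})
      rw [hC.dirichletSum_eq vstar hvadm hi, hGv_star i hi] at h1
      exact h1
end RSDT
end

section
/- Assume (A1)(a), assume the chain is irreducible under every stationary Markov policy, and assume the generalized Perron–Frobenius eigenvalue λ₁ᵈ is finite. Let D ⊆ S be a finite set and let (ρ, ψ) with ψ : S → [0,∞) nonzero and vanishing outside D satisfy min_{u∈𝕌(i)} [ e^{c(i,u)} Σ_{j∈S} ψ(j) P(j|i,u) ] = e^{ρ} ψ(i) for all i ∈ D. Then ρ ≤ λ₁ᵈ. -/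
/-!
Discrete-time controlled Markov chains on the countable state space `S = ℕ`,
with Borel action space `U`, admissible action sets `𝕌 i ⊆ U`, controlled
transition probabilities `P i u j = P(j | i, u)` (valued in `ℝ≥0∞`) and running
cost `c i u = c(i,u)`.

Since admissible policies are deterministic measurable functions of the
history, and the actions appearing in a history are themselves determined by
the past states, an admissible policy is faithfully represented by a family of
maps of state-prefixes `ζ t : (Fin (t+1) → ℕ) → U`; measurability in the
history is automatic because state prefixes form a countable discrete space.
The trajectory law `P_i^ζ` is uniquely determined by its cylinder
probabilities, which are given explicitly by `pathWeight`; accordingly,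
expectations of path functionals are given by explicit (countable) sums.
-/

open Filter Set
open scoped ENNReal NNReal Topology Classical

namespace RSDT

/-- The set of `λ ∈ ℝ` admitting a positive function `Ψ` with
`min_{u∈𝕌(i)} e^{c(i,u)} ∑_j Ψ(j) P(j|i,u) ≤ e^λ Ψ(i)` for all `i`; its
infimum is the generalized Perron–Frobenius eigenvalue `λ₁ᵈ`. -/
def pfSet {U : Type*} (P : ℕ → U → ℕ → ℝ≥0∞) (c : ℕ → U → ℝ) (𝕌 : ℕ → Set U) : Set ℝ :=
  {lam : ℝ | ∃ Ψ : ℕ → ℝ≥0∞, (∀ i, 0 < Ψ i ∧ Ψ i ≠ ∞) ∧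
    ∀ i, minOp P c 𝕌 Ψ i ≤ ENNReal.ofReal (Real.exp lam) * Ψ i}

/-!
Compare the Dirichlet eigenfunction `ψ` with a positive supersolution `Ψ` at level `λ`:
scale `Ψ` by the largest ratio `t = max_D ψ/Ψ`, so that `ψ ≤ tΨ` with equality at some
`i ∈ D` where `ψ i ≠ 0`. Monotonicity and homogeneity of the minimized operator then give
`e^ρ ψ(i) = minOp ψ i ≤ t minOp Ψ i ≤ e^λ t Ψ(i) = e^λ ψ(i)`, hence `ρ ≤ λ`.
-/

section MinOp

variable {U : Type*} (P : ℕ → U → ℕ → ℝ≥0∞) (c : ℕ → U → ℝ) (𝕌 : ℕ → Set U)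

theorem minOp_mono {ψ φ : ℕ → ℝ≥0∞} (h : ψ ≤ φ) (i : ℕ) :
    minOp P c 𝕌 ψ i ≤ minOp P c 𝕌 φ i :=
  iInf_mono fun _ => by gcongr with j; exact h j

theorem minOp_const_mul {t : ℝ≥0∞} (ht0 : t ≠ 0) (htop : t ≠ ∞) (Ψ : ℕ → ℝ≥0∞) (i : ℕ) :
    minOp P c 𝕌 (fun j => t * Ψ j) i = t * minOp P c 𝕌 Ψ i := by
  simp only [minOp, ENNReal.mul_iInf_of_ne ht0 htop, mul_assoc, ENNReal.tsum_mul_left]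
  exact iInf_congr fun _ => mul_left_comm _ _ _

theorem le_of_minOp_eq_of_le_const_mul {ψ Ψ : ℕ → ℝ≥0∞} {ρ lam : ℝ} {t : ℝ≥0∞} {i : ℕ}
    (htop : t ≠ ∞) (hdom : ∀ j, ψ j ≤ t * Ψ j) (htouch : ψ i = t * Ψ i)
    (hψi0 : ψ i ≠ 0) (hψitop : ψ i ≠ ∞)
    (heq : minOp P c 𝕌 ψ i = ENNReal.ofReal (Real.exp ρ) * ψ i)
    (hsuper : minOp P c 𝕌 Ψ i ≤ ENNReal.ofReal (Real.exp lam) * Ψ i) :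
    ρ ≤ lam := by
  have ht0 : t ≠ 0 := by rintro rfl; exact hψi0 (by simpa using htouch)
  have hkey : ENNReal.ofReal (Real.exp ρ) * ψ i ≤ ENNReal.ofReal (Real.exp lam) * ψ i :=
    calc ENNReal.ofReal (Real.exp ρ) * ψ i = minOp P c 𝕌 ψ i := heq.symm
      _ ≤ minOp P c 𝕌 (fun j => t * Ψ j) i := minOp_mono P c 𝕌 hdom i
      _ = t * minOp P c 𝕌 Ψ i := minOp_const_mul P c 𝕌 ht0 htop Ψ i
      _ ≤ t * (ENNReal.ofReal (Real.exp lam) * Ψ i) := by gcongr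
      _ = ENNReal.ofReal (Real.exp lam) * ψ i := by rw [htouch, mul_left_comm]
  have hexp := (ENNReal.mul_le_mul_iff_left hψi0 hψitop).mp hkey
  exact Real.exp_le_exp.mp ((ENNReal.ofReal_le_ofReal_iff (Real.exp_pos lam).le).mp hexp)

end MinOp

theorem exists_le_const_mul_of_support_subset {ψ Ψ : ℕ → ℝ≥0∞} {D : Finset ℕ}
    (hψ0 : ∃ i, ψ i ≠ 0) (hψtop : ∀ i, ψ i ≠ ∞) (hψD : ∀ i ∉ D, ψ i = 0)
    (hΨ : ∀ i, 0 < Ψ i ∧ Ψ i ≠ ∞) :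
    ∃ t ≠ ∞, ∃ i, ψ i ≠ 0 ∧ ψ i = t * Ψ i ∧ ∀ j, ψ j ≤ t * Ψ j := by
  obtain ⟨i₀, hi₀⟩ := hψ0
  have hi₀D : i₀ ∈ D := by by_contra h; exact hi₀ (hψD i₀ h)
  obtain ⟨i, hiD, hmax⟩ := D.exists_mem_eq_sup' ⟨i₀, hi₀D⟩ fun j => ψ j / Ψ j
  have hratio_le : ∀ j ∈ D, ψ j / Ψ j ≤ ψ i / Ψ i := fun j hj =>
    hmax ▸ Finset.le_sup' (fun j => ψ j / Ψ j) hj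
  refine ⟨ψ i / Ψ i, ENNReal.div_ne_top (hψtop i) (hΨ i).1.ne', i, ?_,
    (ENNReal.div_mul_cancel (hΨ i).1.ne' (hΨ i).2).symm, fun j => ?_⟩
  · intro hψi
    have := hratio_le i₀ hi₀D
    rw [hψi, ENNReal.zero_div, nonpos_iff_eq_zero, ENNReal.div_eq_zero_iff] at this
    exact this.elim hi₀ (hΨ i₀).2
  · by_cases hj : j ∈ D
    · exact (ENNReal.div_le_iff (hΨ j).1.ne' (hΨ j).2).mp (hratio_le j hj)
    · simp [hψD j hj]

theorem dirichlet_le_pf_general {U : Type*}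
    (P : ℕ → U → ℕ → ℝ≥0∞) (c : ℕ → U → ℝ) (𝕌 : ℕ → Set U)
    (hne : (pfSet P c 𝕌).Nonempty)
    (D : Finset ℕ) (ρ : ℝ) (ψ : ℕ → ℝ≥0∞)
    (hψ0 : ∃ i, ψ i ≠ 0) (hψfin : ∀ i, ψ i ≠ ∞) (hψD : ∀ i ∉ D, ψ i = 0)
    (heq : ∀ i ∈ D, minOp P c 𝕌 ψ i = ENNReal.ofReal (Real.exp ρ) * ψ i) :
    ρ ≤ sInf (pfSet P c 𝕌) := by
  refine le_csInf hne ?_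
  rintro lam ⟨Ψ, hΨ, hsuper⟩
  obtain ⟨t, htop, i, hψi0, htouch, hdom⟩ :=
    exists_le_const_mul_of_support_subset hψ0 hψfin hψD hΨ
  have hiD : i ∈ D := by by_contra h; exact hψi0 (hψD i h)
  exact le_of_minOp_eq_of_le_const_mul P c 𝕌 htop hdom htouch hψi0 (hψfin i) (heq i hiD)
    (hsuper i)

/-- Lemma 4.1.  Any Dirichlet eigenvalue on a finite set is
dominated by the generalized Perron–Frobenius eigenvalue `λ₁ᵈ = sInf pfSet`. -/
theorem dirichlet_le_pf {U : Type*} [TopologicalSpace U] [MeasurableSpace U]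
    (P : ℕ → U → ℕ → ℝ≥0∞) (c : ℕ → U → ℝ) (𝕌 : ℕ → Set U)
    (hM : Model P c 𝕌) (hc : ∀ i, ∀ u ∈ 𝕌 i, 0 ≤ c i u) (hA1a : A1a P c 𝕌)
    (hirr : ∀ v : ℕ → U, IsSM 𝕌 v → Irreducible P v)
    (hne : (pfSet P c 𝕌).Nonempty) (hbdd : BddBelow (pfSet P c 𝕌))
    (D : Finset ℕ) (ρ : ℝ) (ψ : ℕ → ℝ≥0∞)
    (hψ0 : ∃ i, ψ i ≠ 0) (hψfin : ∀ i, ψ i ≠ ∞) (hψD : ∀ i ∉ D, ψ i = 0)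
    (heq : ∀ i ∈ D, minOp P c 𝕌 ψ i = ENNReal.ofReal (Real.exp ρ) * ψ i) :
    ρ ≤ sInf (pfSet P c 𝕌) :=
  dirichlet_le_pf_general P c 𝕌 hne D ρ ψ hψ0 hψfin hψD heq

end RSDT
end
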